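/- Let Γ be a finite simple graph and g ∈ A(Γ). Then g = u⁻¹ v u in A(Γ) for some words u, v such that the word u⁻¹ vᵐ u is reduced for every nonzero integer m. -/

import Mathlib

open SimpleGraph

variable {V : Type*}

/-- Relators of the right-angled Artin group on a graph. -/
def raagRels (G : SimpleGraph V) : Set (FreeGroup V) :=
  {r | ∃ a b : V, G.Adj a b ∧
    r = FreeGroup.of a * FreeGroup.of b * (FreeGroup.of a)⁻¹ * (FreeGroup.of b)⁻¹}

/-- The right-angled Artin group on a graph. -/
def RAAG (G : SimpleGraph V) : Type _ := PresentedGroup (raagRels G)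

instance (G : SimpleGraph V) : Group (RAAG G) := by unfold RAAG; infer_instance

/-- The generator of `RAAG G` corresponding to a vertex. -/
def RAAG.gen (G : SimpleGraph V) (v : V) : RAAG G := PresentedGroup.of v

/-- The element of `RAAG G` represented by a word. -/
def wordProd (G : SimpleGraph V) (w : List (V × Bool)) : RAAG G :=
  (w.map fun p => if p.2 then RAAG.gen G p.1 else (RAAG.gen G p.1)⁻¹).prod

/-- A word is reduced if no shorter word represents the same element. -/
def IsReducedWord (G : SimpleGraph V) (w : List (V × Bool)) : Prop :=
  ∀ w' : List (V × Bool), wordProd G w' = wordProd G w → w.length ≤ w'.length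

/-- `B` is anticonnected in `G` if it induces a connected subgraph of the complement. -/
def Anticonnected (G : SimpleGraph V) (B : Set V) : Prop :=
  ((Gᶜ).induce B).Connected

/-- Contraction of a graph relative to a set `B` of vertices: `B` collapses to
the vertex `none`. -/
def SimpleGraph.contract (G : SimpleGraph V) (B : Set V) :
    SimpleGraph (Option {v : V // v ∉ B}) where
  Adj x y :=
    match x, y with
    | some q, some q' => G.Adj q.1 q'.1
    | some q, none => ∃ b ∈ B, G.Adj q.1 b
    | none, some q => ∃ b ∈ B, G.Adj q.1 b
    | none, none => False
  symm := ⟨by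
    rintro (_|q) (_|q') h
    · exact h
    · exact h
    · exact h
    · exact G.adj_symm h⟩
  loopless := ⟨by
    rintro (_|q) h
    · exact h
    · exact G.loopless.irrefl _ h⟩

/-- Co-contraction of a graph relative to a set `B` of vertices: `B` collapses to
the vertex `none`, which is joined to the common neighbors of `B`. -/
def SimpleGraph.coContract (G : SimpleGraph V) (B : Set V) :
    SimpleGraph (Option {v : V // v ∉ B}) where
  Adj x y :=
    match x, y with
    | some q, some q' => G.Adj q.1 q'.1
    | some q, none => ∀ b ∈ B, G.Adj q.1 b
    | none, some q => ∀ b ∈ B, G.Adj q.1 b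
    | none, none => False
  symm := ⟨by
    rintro (_|q) (_|q') h
    · exact h
    · exact h
    · exact h
    · exact G.adj_symm h⟩
  loopless := ⟨by
    rintro (_|q) h
    · exact h
    · exact G.loopless.irrefl _ h⟩

/-- The formal inverse of a word. -/
def wordInv (w : List (V × Bool)) : List (V × Bool) :=
  w.reverse.map fun p => (p.1, !p.2)

/-- The word obtained by concatenating `m` copies of `v` (or `|m|` copies of the
inverse word when `m < 0`). -/
def wordZPow (v : List (V × Bool)) : ℤ → List (V × Bool)
  | Int.ofNat m => (List.replicate m v).flatten
  | Int.negSucc m => (List.replicate (m + 1) (wordInv v)).flatten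

/-- A sequence of vertices of `B` is a contraction sequence if for every pair
`b, b'` of vertices of `B` it has a subsequence which is a path from `b` to `b'`
in the complement graph. -/
def IsContractionSeq (G : SimpleGraph V) (B : Set V) (bs : List V) : Prop :=
  ∀ b ∈ B, ∀ b' ∈ B, ∃ l : List V, l.Sublist bs ∧ l.head? = some b ∧
    l.getLast? = some b' ∧ l.Chain' (fun x y => x ≠ y ∧ ¬ G.Adj x y)

/-- A contraction word of `B`: a reduced word with letters in `B^{±1}` whose
sequence of letters is a contraction sequence. -/
def IsContractionWord (G : SimpleGraph V) (B : Set V) (w : List (V × Bool)) : Prop :=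
  IsReducedWord G w ∧ (∀ p ∈ w, p.1 ∈ B) ∧ IsContractionSeq G B (w.map Prod.fst)

/-- A contraction element of `B` is one represented by a contraction word of `B`. -/
def IsContractionElem (G : SimpleGraph V) (B : Set V) (g : RAAG G) : Prop :=
  ∃ w : List (V × Bool), IsContractionWord G B w ∧ wordProd G w = g
namespace RaagAux

open List

variable {V : Type*} (G : SimpleGraph V)

/-- inverse of a letter -/
def linv (x : V × Bool) : V × Bool := (x.1, !x.2)

@[simp] lemma linv_linv (x : V × Bool) : linv (linv x) = x := by
  simp [linv]

@[simp] lemma linv_fst (x : V × Bool) : (linv x).1 = x.1 := rfl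

lemma linv_ne (x : V × Bool) : linv x ≠ x := by
  cases x with
  | mk a b => simp [linv]

/-- commutation of letters -/
def cm (x y : V × Bool) : Prop := x.1 = y.1 ∨ G.Adj x.1 y.1

lemma cm_symm {x y : V × Bool} (h : cm G x y) : cm G y x := by
  rcases h with h | h
  · exact Or.inl h.symm
  · exact Or.inr h.symm

@[simp] lemma cm_linv_left {x y : V × Bool} : cm G (linv x) y ↔ cm G x y := Iff.rfl

@[simp] lemma cm_linv_right {x y : V × Bool} : cm G x (linv y) ↔ cm G x y := Iff.rfl

lemma cm_of_adj {x y : V × Bool} (h : G.Adj x.1 y.1) : cm G x y := Or.inr h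

def AllCm (x : V × Bool) (A : List (V × Bool)) : Prop := ∀ y ∈ A, cm G x y

@[simp] lemma allCm_nil (x : V × Bool) : AllCm G x [] := by intro y hy; cases hy

@[simp] lemma allCm_cons {x y : V × Bool} {A : List (V × Bool)} :
    AllCm G x (y :: A) ↔ cm G x y ∧ AllCm G x A := by
  constructor
  · intro h; exact ⟨h y mem_cons_self, fun z hz => h z (mem_cons_of_mem _ hz)⟩
  · rintro ⟨h1, h2⟩ z hz
    rcases mem_cons.1 hz with rfl | hz
    · exact h1
    · exact h2 z hz

@[simp] lemma allCm_append {x : V × Bool} {A B : List (V × Bool)} :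
    AllCm G x (A ++ B) ↔ AllCm G x A ∧ AllCm G x B := by
  constructor
  · intro h; exact ⟨fun y hy => h y (mem_append_left _ hy), fun y hy => h y (mem_append_right _ hy)⟩
  · rintro ⟨h1, h2⟩ y hy
    rcases mem_append.1 hy with hy | hy
    · exact h1 y hy
    · exact h2 y hy

@[simp] lemma allCm_linv {x : V × Bool} {A : List (V × Bool)} :
    AllCm G (linv x) A ↔ AllCm G x A := Iff.rfl

/-- the element of the RAAG represented by a letter -/
def lp (x : V × Bool) : RAAG G := if x.2 then RAAG.gen G x.1 else (RAAG.gen G x.1)⁻¹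

lemma wordProd_eq_prod (w : List (V × Bool)) :
    wordProd G w = (w.map (lp G)).prod := rfl

@[simp] lemma wordProd_nil : wordProd G ([] : List (V × Bool)) = 1 := rfl

@[simp] lemma wordProd_cons (x : V × Bool) (w : List (V × Bool)) :
    wordProd G (x :: w) = lp G x * wordProd G w := by
  simp [wordProd_eq_prod]

@[simp] lemma wordProd_append (A B : List (V × Bool)) :
    wordProd G (A ++ B) = wordProd G A * wordProd G B := by
  simp [wordProd_eq_prod]

@[simp] lemma wordProd_singleton (x : V × Bool) : wordProd G [x] = lp G x := by
  simp

@[simp] lemma lp_linv (x : V × Bool) : lp G (linv x) = (lp G x)⁻¹ := by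
  cases x with
  | mk a b => cases b <;> simp [lp, linv]

/-- the defining relations hold -/
lemma gen_comm {a b : V} (h : G.Adj a b) :
    RAAG.gen G a * RAAG.gen G b = RAAG.gen G b * RAAG.gen G a := by
  have : (QuotientGroup.mk (FreeGroup.of a * FreeGroup.of b * (FreeGroup.of a)⁻¹ *
      (FreeGroup.of b)⁻¹) : RAAG G) = 1 := by
    rw [QuotientGroup.eq_one_iff]
    exact Subgroup.subset_normalClosure ⟨a, b, h, rfl⟩
  have h2 : RAAG.gen G a * RAAG.gen G b * (RAAG.gen G a)⁻¹ * (RAAG.gen G b)⁻¹ = 1 := by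
    exact this
  have h3 : RAAG.gen G a * RAAG.gen G b * (RAAG.gen G b * RAAG.gen G a)⁻¹ = 1 := by
    rw [mul_inv_rev, ← mul_assoc]
    exact h2
  exact mul_inv_eq_one.1 h3

lemma lp_comm {x y : V × Bool} (h : cm G x y) :
    Commute (lp G x) (lp G y) := by
  rcases h with h | h
  · cases x with
    | mk a xb =>
      cases y with
      | mk c yb =>
        simp only at h
        subst h
        cases xb <;> cases yb <;> simp [lp] <;>
          first
          | exact Commute.refl _
          | exact (Commute.refl _).inv_left
          | exact (Commute.refl _).inv_right
          | exact ((Commute.refl _).inv_left).inv_right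
  · have hc : Commute (RAAG.gen G x.1) (RAAG.gen G y.1) := gen_comm G h
    cases x with
    | mk a xb =>
      cases y with
      | mk c yb =>
        cases xb <;> cases yb <;> simp [lp] <;>
          first
          | exact hc
          | exact hc.inv_left
          | exact hc.inv_right
          | exact (hc.inv_left).inv_right

lemma lp_comm_word {x : V × Bool} {A : List (V × Bool)} (h : AllCm G x A) :
    Commute (lp G x) (wordProd G A) := by
  induction A with
  | nil => simp [Commute, SemiconjBy]
  | cons y t ih =>
    rw [allCm_cons] at h
    rw [wordProd_cons]
    exact (lp_comm G h.1).mul_right (ih h.2)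

@[simp] lemma wordInv_nil : wordInv ([] : List (V × Bool)) = [] := rfl

lemma wordInv_append (A B : List (V × Bool)) :
    wordInv (A ++ B) = wordInv B ++ wordInv A := by
  simp [wordInv]

lemma wordInv_cons (x : V × Bool) (A : List (V × Bool)) :
    wordInv (x :: A) = wordInv A ++ [linv x] := by
  simp [wordInv, linv]

@[simp] lemma wordInv_singleton (x : V × Bool) : wordInv [x] = [linv x] := rfl

@[simp] lemma wordProd_wordInv (A : List (V × Bool)) :
    wordProd G (wordInv A) = (wordProd G A)⁻¹ := by
  induction A with
  | nil => simp
  | cons x t ih => simp [wordInv_cons, ih, mul_comm]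

@[simp] lemma wordInv_length (A : List (V × Bool)) :
    (wordInv A).length = A.length := by simp [wordInv]

@[simp] lemma wordInv_wordInv (A : List (V × Bool)) :
    wordInv (wordInv A) = A := by
  induction A with
  | nil => rfl
  | cons x t ih => simp [wordInv_cons, wordInv_append, ih]

lemma mem_wordInv {x : V × Bool} {A : List (V × Bool)} :
    x ∈ wordInv A ↔ linv x ∈ A := by
  simp only [wordInv, mem_map, mem_reverse]
  constructor
  · rintro ⟨y, hy, rfl⟩
    simpa [linv] using hy
  · intro h
    exact ⟨linv x, h, by simp [linv]⟩

lemma allCm_wordInv {x : V × Bool} {A : List (V × Bool)} :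
    AllCm G x (wordInv A) ↔ AllCm G x A := by
  constructor
  · intro h y hy
    have := h (linv y) (mem_wordInv.2 (by simpa using hy))
    simpa using this
  · intro h y hy
    have := h (linv y) (mem_wordInv.1 hy)
    rcases this with h1 | h1
    · exact Or.inl (by simpa using h1)
    · exact Or.inr (by simpa using h1)

/-- surjectivity of wordProd -/
lemma wordProd_mk (w : List (V × Bool)) :
    wordProd G w = (QuotientGroup.mk (FreeGroup.mk w) : RAAG G) := by
  induction w with
  | nil => simp [FreeGroup.one_eq_mk]; rfl
  | cons x t ih =>
    have : FreeGroup.mk (x :: t) = FreeGroup.mk [x] * FreeGroup.mk t := by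
      rw [FreeGroup.mul_mk]; rfl
    rw [wordProd_cons, ih, this]
    have hx : (QuotientGroup.mk (FreeGroup.mk [x]) : RAAG G) = lp G x := by
      cases x with
      | mk a b =>
        cases b
        · have h4 : FreeGroup.mk [(a, false)] = (FreeGroup.of a)⁻¹ := by
            show _ = (FreeGroup.mk [(a, true)])⁻¹
            rw [FreeGroup.inv_mk]
            rfl
          rw [h4]
          show _ = (lp G (a, false))
          simp only [lp, RAAG.gen, PresentedGroup.of]
          rfl
        · rfl
    rw [← hx]
    rfl

lemma wordProd_surjective : Function.Surjective (wordProd G) := by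
  intro g
  classical
  obtain ⟨f, rfl⟩ := (QuotientGroup.mk_surjective :
    Function.Surjective (QuotientGroup.mk (s := Subgroup.normalClosure (raagRels G)))) g
  exact ⟨f.toWord, by rw [wordProd_mk, FreeGroup.mk_toWord]⟩

end RaagAux
namespace RaagAux

open List

variable {V : Type*} (G : SimpleGraph V)

/-- head-movable letter: `x` occurs with everything before it commuting with it -/
def HM (w : List (V × Bool)) (x : V × Bool) : Prop :=
  ∃ p s, w = p ++ x :: s ∧ AllCm G x p

/-- tail-movable letter -/
def TM (w : List (V × Bool)) (x : V × Bool) : Prop :=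
  ∃ p s, w = p ++ x :: s ∧ AllCm G x s

/-- a cancelling pair -/
def HP (w : List (V × Bool)) : Prop :=
  ∃ p x q s, w = p ++ x :: (q ++ linv x :: s) ∧ AllCm G x q

variable {G}

lemma loc {A B P S : List (V × Bool)} {x : V × Bool} (h : A ++ B = P ++ x :: S) :
    (∃ S₁, A = P ++ x :: S₁ ∧ S = S₁ ++ B) ∨ (∃ P₂, P = A ++ P₂ ∧ B = P₂ ++ x :: S) := by
  induction A generalizing P with
  | nil => exact Or.inr ⟨P, rfl, h⟩
  | cons a A' ih =>
    cases P with
    | nil =>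
      simp only [cons_append, nil_append] at h
      rw [List.cons_eq_cons] at h
      exact Or.inl ⟨A', by rw [h.1, nil_append], h.2.symm⟩
    | cons p P' =>
      simp only [cons_append] at h
      rw [List.cons_eq_cons] at h
      obtain ⟨rfl, h2⟩ := h
      rcases ih h2 with ⟨S₁, h3, h4⟩ | ⟨P₂, h3, h4⟩
      · exact Or.inl ⟨S₁, by rw [h3]; rfl, h4⟩
      · exact Or.inr ⟨P₂, by rw [h3]; rfl, h4⟩


lemma len_absurd {p s : List (V × Bool)} {x : V × Bool} (h : ([] : List (V × Bool)) = p ++ x :: s) :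
    False := by
  have := congrArg List.length h
  simp only [List.length_nil, List.length_append, List.length_cons] at this
  omega

lemma hm_nil {x : V × Bool} : ¬ HM G [] x := by
  rintro ⟨p, s, h, -⟩
  exact len_absurd h

lemma tm_nil {x : V × Bool} : ¬ TM G [] x := by
  rintro ⟨p, s, h, -⟩
  exact len_absurd h

lemma hp_nil : ¬ HP G ([] : List (V × Bool)) := by
  rintro ⟨p, x, q, s, h, -⟩
  have := congrArg List.length h
  simp only [List.length_nil, List.length_append, List.length_cons] at this
  omega

lemma hm_append {A B : List (V × Bool)} {x : V × Bool} :
    HM G (A ++ B) x ↔ HM G A x ∨ (AllCm G x A ∧ HM G B x) := by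
  constructor
  · rintro ⟨p, s, h, hc⟩
    rcases loc h with ⟨S₁, h1, h2⟩ | ⟨P₂, h1, h2⟩
    · exact Or.inl ⟨p, S₁, h1, hc⟩
    · subst h1
      rw [allCm_append] at hc
      exact Or.inr ⟨hc.1, P₂, s, h2, hc.2⟩
  · rintro (⟨p, s, h, hc⟩ | ⟨hA, p, s, h, hc⟩)
    · exact ⟨p, s ++ B, by rw [h]; simp, hc⟩
    · exact ⟨A ++ p, s, by rw [h]; simp, by rw [allCm_append]; exact ⟨hA, hc⟩⟩

lemma tm_append {A B : List (V × Bool)} {x : V × Bool} :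
    TM G (A ++ B) x ↔ TM G B x ∨ (TM G A x ∧ AllCm G x B) := by
  constructor
  · rintro ⟨p, s, h, hc⟩
    rcases loc h with ⟨S₁, h1, h2⟩ | ⟨P₂, h1, h2⟩
    · subst h2
      rw [allCm_append] at hc
      exact Or.inr ⟨⟨p, S₁, h1, hc.1⟩, hc.2⟩
    · exact Or.inl ⟨P₂, s, h2, hc⟩
  · rintro (⟨p, s, h, hc⟩ | ⟨⟨p, s, h, hc⟩, hB⟩)
    · exact ⟨A ++ p, s, by rw [h]; simp, hc⟩
    · exact ⟨p, s ++ B, by rw [h]; simp, by rw [allCm_append]; exact ⟨hc, hB⟩⟩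

lemma hm_cons {a x : V × Bool} {B : List (V × Bool)} :
    HM G (a :: B) x ↔ x = a ∨ (cm G x a ∧ HM G B x) := by
  have := hm_append (G := G) (A := [a]) (B := B) (x := x)
  simp only [singleton_append] at this
  rw [this]
  constructor
  · rintro (⟨p, s, h, hc⟩ | ⟨hc, h⟩)
    · cases p with
      | nil =>
        rw [nil_append, List.cons_eq_cons] at h
        exact Or.inl h.1.symm
      | cons c p' =>
        exfalso
        have := congrArg List.length h
        simp only [List.length_cons, List.length_nil, List.length_append] at this
        omega
    · rw [allCm_cons] at hc
      exact Or.inr ⟨hc.1, h⟩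
  · rintro (rfl | ⟨hc, h⟩)
    · exact Or.inl ⟨[], [], rfl, allCm_nil G x⟩
    · exact Or.inr ⟨by rw [allCm_cons]; exact ⟨hc, allCm_nil G x⟩, h⟩

lemma tm_cons {a x : V × Bool} {B : List (V × Bool)} :
    TM G (a :: B) x ↔ TM G B x ∨ (x = a ∧ AllCm G x B) := by
  have := tm_append (G := G) (A := [a]) (B := B) (x := x)
  simp only [singleton_append] at this
  rw [this]
  constructor
  · rintro (h | ⟨⟨p, s, h, hc⟩, hB⟩)
    · exact Or.inl h
    · cases p with
      | nil =>
        rw [nil_append, List.cons_eq_cons] at h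
        exact Or.inr ⟨h.1.symm, hB⟩
      | cons c p' =>
        exfalso
        have := congrArg List.length h
        simp only [List.length_cons, List.length_nil, List.length_append] at this
        omega
  · rintro (h | ⟨rfl, hB⟩)
    · exact Or.inl h
    · exact Or.inr ⟨⟨[], [], rfl, allCm_nil G x⟩, hB⟩

lemma hm_mem {w : List (V × Bool)} {x : V × Bool} (h : HM G w x) : x ∈ w := by
  obtain ⟨p, s, rfl, -⟩ := h
  simp

lemma tm_mem {w : List (V × Bool)} {x : V × Bool} (h : TM G w x) : x ∈ w := by
  obtain ⟨p, s, rfl, -⟩ := h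
  simp

/-- the key decomposition of cancelling pairs in a concatenation -/
lemma hp_append {A B : List (V × Bool)} :
    HP G (A ++ B) ↔ HP G A ∨ HP G B ∨ ∃ x, TM G A x ∧ HM G B (linv x) := by
  constructor
  · rintro ⟨p, x, q, s, h, hc⟩
    rcases loc h with ⟨S₁, h1, h2⟩ | ⟨P₂, h1, h2⟩
    · -- x in A
      rcases loc h2.symm with ⟨S₂, h3, h4⟩ | ⟨P₃, h3, h4⟩
      · -- linv x in A as well
        exact Or.inl ⟨p, x, q, S₂, by rw [h1, h3], hc⟩
      · -- linv x in B
        subst h3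
        rw [allCm_append] at hc
        exact Or.inr (Or.inr ⟨x, ⟨p, S₁, h1, hc.1⟩, ⟨P₃, s, h4, hc.2⟩⟩)
    · -- x in B
      exact Or.inr (Or.inl ⟨P₂, x, q, s, h2, hc⟩)
  · rintro (⟨p, x, q, s, h, hc⟩ | ⟨p, x, q, s, h, hc⟩ | ⟨x, ⟨p, q, h1, hc1⟩, ⟨p', s', h2, hc2⟩⟩)
    · exact ⟨p, x, q, s ++ B, by rw [h]; simp, hc⟩
    · exact ⟨A ++ p, x, q, s, by rw [h]; simp, hc⟩
    · refine ⟨p, x, q ++ p', s', ?_, ?_⟩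
      · rw [h1, h2]; simp
      · rw [allCm_append]; exact ⟨hc1, hc2⟩

lemma hp_cons {a : V × Bool} {B : List (V × Bool)} :
    HP G (a :: B) ↔ HP G B ∨ HM G B (linv a) := by
  have := hp_append (G := G) (A := [a]) (B := B)
  simp only [singleton_append] at this
  rw [this]
  have h1 : ¬ HP G [a] := by
    rintro ⟨p, x, q, s, h, -⟩
    have := congrArg List.length h
    simp only [List.length_cons, List.length_nil, List.length_append] at this
    omega
  have h2 : ∀ x, TM G [a] x ↔ x = a := by
    intro x
    constructor
    · rintro ⟨p, s, h, -⟩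
      cases p with
      | nil =>
        rw [nil_append, List.cons_eq_cons] at h
        exact h.1.symm
      | cons c p' =>
        exfalso
        have := congrArg List.length h
        simp only [List.length_cons, List.length_nil, List.length_append] at this
        omega
    · rintro rfl; exact ⟨[], [], rfl, allCm_nil G _⟩
  constructor
  · rintro (h | h | ⟨x, hx, hm⟩)
    · exact absurd h h1
    · exact Or.inl h
    · obtain rfl := (h2 x).1 hx
      exact Or.inr hm
  · rintro (h | h)
    · exact Or.inr (Or.inl h)
    · exact Or.inr (Or.inr ⟨a, (h2 a).2 rfl, h⟩)

/-- transfer along wordInv -/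
lemma wordInv_pair_decomp (p s : List (V × Bool)) (x : V × Bool) :
    wordInv (p ++ x :: s) = wordInv s ++ linv x :: wordInv p := by
  rw [wordInv_append, wordInv_cons]
  simp

lemma hm_wordInv {w : List (V × Bool)} {x : V × Bool} :
    HM G (wordInv w) x ↔ TM G w (linv x) := by
  constructor
  · rintro ⟨p, s, h, hc⟩
    refine ⟨wordInv s, wordInv p, ?_, ?_⟩
    · rw [← wordInv_wordInv (A := w), h, wordInv_pair_decomp]
    · rw [allCm_linv, allCm_wordInv]
      exact hc
  · rintro ⟨p, s, h, hc⟩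
    refine ⟨wordInv s, wordInv p, ?_, ?_⟩
    · rw [h, wordInv_pair_decomp, linv_linv]
    · rw [allCm_wordInv]
      rw [allCm_linv] at hc
      exact hc

lemma tm_wordInv {w : List (V × Bool)} {x : V × Bool} :
    TM G (wordInv w) x ↔ HM G w (linv x) := by
  have h := hm_wordInv (G := G) (w := wordInv w) (x := linv x)
  rw [wordInv_wordInv, linv_linv] at h
  exact h.symm

lemma hp_wordInv_of {w : List (V × Bool)} (h : HP G w) : HP G (wordInv w) := by
  obtain ⟨p, x, q, s, rfl, hc⟩ := h
  refine ⟨wordInv s, x, wordInv q, wordInv p, ?_, (allCm_wordInv (G := G)).2 hc⟩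
  rw [wordInv_pair_decomp, wordInv_pair_decomp, linv_linv]
  simp

lemma hp_wordInv {w : List (V × Bool)} :
    HP G (wordInv w) ↔ HP G w := by
  constructor
  · intro h
    have := hp_wordInv_of (G := G) h
    rwa [wordInv_wordInv] at this
  · exact hp_wordInv_of

end RaagAux
namespace RaagAux

open List

variable {V : Type*} (G : SimpleGraph V)

attribute [local instance] Classical.propDecidable

/-- delete the first cancellable occurrence of `linv x` -/
noncomputable def dels (x : V × Bool) : List (V × Bool) → Option (List (V × Bool))
  | [] => none
  | y :: w => if y = linv x then some w
      else if cm G x y then (dels x w).map (y :: ·) else none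

@[simp] lemma dels_nil (x : V × Bool) : dels G x [] = none := rfl

lemma dels_cons (x y : V × Bool) (w : List (V × Bool)) :
    dels G x (y :: w) = if y = linv x then some w
      else if cm G x y then (dels G x w).map (y :: ·) else none := rfl

/-- multiply a letter onto a word -/
noncomputable def ins (x : V × Bool) (w : List (V × Bool)) : List (V × Bool) :=
  (dels G x w).getD (x :: w)

variable {G}

lemma dels_some {x : V × Bool} {w w' : List (V × Bool)} (h : dels G x w = some w') :
    ∃ p s, w = p ++ linv x :: s ∧ w' = p ++ s ∧ ∀ y ∈ p, cm G x y ∧ y ≠ linv x := by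
  induction w generalizing w' with
  | nil => simp at h
  | cons y t ih =>
    rw [dels_cons] at h
    by_cases hy : y = linv x
    · rw [if_pos hy] at h
      obtain rfl := Option.some_injective _ h
      exact ⟨[], _, by rw [hy]; rfl, rfl, by simp⟩
    · rw [if_neg hy] at h
      by_cases hc : cm G x y
      · rw [if_pos hc] at h
        obtain ⟨t', ht', rfl⟩ := Option.map_eq_some_iff.1 h
        obtain ⟨p, s, h1, h2, h3⟩ := ih ht'
        refine ⟨y :: p, s, by rw [h1]; rfl, by rw [h2]; rfl, ?_⟩
        intro z hz
        rcases mem_cons.1 hz with rfl | hz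
        · exact ⟨hc, hy⟩
        · exact h3 z hz
      · rw [if_neg hc] at h
        simp at h

lemma dels_isSome {x : V × Bool} {w : List (V × Bool)} (h : HM G w (linv x)) :
    (dels G x w).isSome := by
  obtain ⟨p, s, rfl, hc⟩ := h
  induction p with
  | nil =>
    rw [nil_append, dels_cons, if_pos rfl]
    rfl
  | cons y p' ih =>
    rw [allCm_cons] at hc
    rw [cons_append, dels_cons]
    by_cases hy : y = linv x
    · rw [if_pos hy]; rfl
    · rw [if_neg hy, if_pos (by simpa using hc.1)]
      have := ih hc.2
      rw [Option.isSome_map]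
      exact this

lemma dels_none {x : V × Bool} {w : List (V × Bool)} (h : dels G x w = none) :
    ¬ HM G w (linv x) := by
  intro hm
  have := dels_isSome hm
  rw [h] at this
  simp at this

variable (G)

/-- the swap relation -/
def Step (w w' : List (V × Bool)) : Prop :=
  ∃ P y z S, G.Adj y.1 z.1 ∧ w = P ++ y :: z :: S ∧ w' = P ++ z :: y :: S

/-- shuffle equivalence -/
def Shuf : List (V × Bool) → List (V × Bool) → Prop := Relation.ReflTransGen (Step G)

lemma shuf_refl (w : List (V × Bool)) : Shuf G w w := Relation.ReflTransGen.refl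

variable {G}

lemma shuf_trans {a b c : List (V × Bool)} (h1 : Shuf G a b) (h2 : Shuf G b c) :
    Shuf G a c := Relation.ReflTransGen.trans h1 h2

lemma step_symm {a b : List (V × Bool)} (h : Step G a b) : Step G b a := by
  obtain ⟨P, y, z, S, hadj, h1, h2⟩ := h
  exact ⟨P, z, y, S, hadj.symm, h2, h1⟩

lemma step_shuf {a b : List (V × Bool)} (h : Step G a b) : Shuf G a b :=
  Relation.ReflTransGen.single h

lemma shuf_symm {a b : List (V × Bool)} (h : Shuf G a b) : Shuf G b a := by
  induction h with
  | refl => exact shuf_refl G a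
  | tail h1 h2 ih => exact shuf_trans (step_shuf (step_symm h2)) ih

lemma step_cons {a b : List (V × Bool)} (x : V × Bool) (h : Step G a b) :
    Step G (x :: a) (x :: b) := by
  obtain ⟨P, y, z, S, hadj, h1, h2⟩ := h
  exact ⟨x :: P, y, z, S, hadj, by rw [h1]; rfl, by rw [h2]; rfl⟩

lemma shuf_cons {a b : List (V × Bool)} (x : V × Bool) (h : Shuf G a b) :
    Shuf G (x :: a) (x :: b) := by
  induction h with
  | refl => exact shuf_refl G _
  | tail h1 h2 ih => exact shuf_trans ih (step_shuf (step_cons x h2))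

lemma step_append_right {a b : List (V × Bool)} (B : List (V × Bool)) (h : Step G a b) :
    Step G (a ++ B) (b ++ B) := by
  obtain ⟨P, y, z, S, hadj, h1, h2⟩ := h
  exact ⟨P, y, z, S ++ B, hadj, by rw [h1]; simp, by rw [h2]; simp⟩

lemma shuf_append_right {a b : List (V × Bool)} (B : List (V × Bool)) (h : Shuf G a b) :
    Shuf G (a ++ B) (b ++ B) := by
  induction h with
  | refl => exact shuf_refl G _
  | tail h1 h2 ih => exact shuf_trans ih (step_shuf (step_append_right B h2))

lemma step_length {a b : List (V × Bool)} (h : Step G a b) : a.length = b.length := by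
  obtain ⟨P, y, z, S, hadj, h1, h2⟩ := h
  rw [h1, h2]; simp

lemma shuf_length {a b : List (V × Bool)} (h : Shuf G a b) : a.length = b.length := by
  induction h with
  | refl => rfl
  | tail h1 h2 ih => rw [ih, step_length h2]

lemma shuf_wordProd {a b : List (V × Bool)} (h : Shuf G a b) :
    wordProd G a = wordProd G b := by
  induction h with
  | refl => rfl
  | tail h1 h2 ih =>
    rw [ih]
    obtain ⟨P, y, z, S, hadj, h3, h4⟩ := h2
    rw [h3, h4]
    simp only [wordProd_append, wordProd_cons, ← mul_assoc]
    congr 1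
    rw [mul_assoc, (lp_comm G (Or.inr hadj)).eq, ← mul_assoc]

/-- moving a letter through a commuting prefix -/
lemma shuf_move {x : V × Bool} {p : List (V × Bool)}
    (h : ∀ y ∈ p, cm G x y ∧ y ≠ linv x) : Shuf G (x :: p) (p ++ [x]) := by
  induction p with
  | nil => exact shuf_refl G _
  | cons y p' ih =>
    have hy := h y mem_cons_self
    have ih' := ih fun z hz => h z (mem_cons_of_mem _ hz)
    by_cases hxy : y = x
    · subst hxy
      exact shuf_cons y ih'
    · have hadj : G.Adj x.1 y.1 := by
        rcases hy.1 with h1 | h1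
        · exfalso
          apply hxy
          have : y = (y.1, y.2) := rfl
          cases x with
          | mk a c =>
            cases y with
            | mk d e =>
              simp only at h1
              subst h1
              cases c <;> cases e <;> simp_all [linv]
        · exact h1
      refine shuf_trans (step_shuf ⟨[], x, y, p', hadj, rfl, rfl⟩) ?_
      exact shuf_cons y ih'

/-- Step compatibility of dels -/
lemma dels_step {x : V × Bool} {w w' : List (V × Bool)} (h : Step G w w') :
    (dels G x w = none ∧ dels G x w' = none) ∨
      ∃ r r', dels G x w = some r ∧ dels G x w' = some r' ∧ Shuf G r r' := by
  obtain ⟨P, y, z, S, hadj, rfl, rfl⟩ := h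
  induction P with
  | nil =>
    rw [nil_append, nil_append]
    have hyz : y.1 ≠ z.1 := hadj.ne
    by_cases hy : y = linv x
    · have hz : z ≠ linv x := by
        intro hz
        exact hyz (by rw [hy, hz])
      have hcz : cm G x z := by
        refine Or.inr ?_
        have h5 : x.1 = y.1 := by rw [hy]; rfl
        rw [h5]; exact hadj
      rw [dels_cons, if_pos hy, dels_cons, if_neg hz, if_pos hcz, dels_cons, if_pos hy]
      exact Or.inr ⟨z :: S, z :: S, rfl, rfl, shuf_refl G _⟩
    · by_cases hz : z = linv x
      · have hcy : cm G x y := by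
          refine Or.inr ?_
          have h5 : x.1 = z.1 := by rw [hz]; rfl
          rw [h5]; exact hadj.symm
        rw [dels_cons, if_neg hy, if_pos hcy, dels_cons, if_pos hz, dels_cons, if_pos hz]
        exact Or.inr ⟨y :: S, y :: S, rfl, rfl, shuf_refl G _⟩
      · by_cases hcy : cm G x y
        · by_cases hcz : cm G x z
          · rw [dels_cons, if_neg hy, if_pos hcy, dels_cons, if_neg hz, if_pos hcz,
              dels_cons, if_neg hz, if_pos hcz, dels_cons, if_neg hy, if_pos hcy]
            cases hS : dels G x S with
            | none => exact Or.inl ⟨rfl, rfl⟩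
            | some r =>
              refine Or.inr ⟨y :: z :: r, z :: y :: r, rfl, rfl, ?_⟩
              exact step_shuf ⟨[], y, z, r, hadj, rfl, rfl⟩
          · rw [dels_cons, if_neg hy, if_pos hcy, dels_cons, if_neg hz, if_neg hcz,
              dels_cons, if_neg hz, if_neg hcz]
            exact Or.inl ⟨rfl, rfl⟩
        · by_cases hcz : cm G x z
          · rw [dels_cons, if_neg hy, if_neg hcy, dels_cons, if_neg hz, if_pos hcz,
              dels_cons, if_neg hy, if_neg hcy]
            exact Or.inl ⟨rfl, by rfl⟩
          · rw [dels_cons, if_neg hy, if_neg hcy, dels_cons, if_neg hz, if_neg hcz]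
            exact Or.inl ⟨rfl, rfl⟩
  | cons a P' ih =>
    rw [cons_append, cons_append, dels_cons, dels_cons]
    by_cases ha : a = linv x
    · rw [if_pos ha, if_pos ha]
      refine Or.inr ⟨_, _, rfl, rfl, ?_⟩
      exact step_shuf ⟨P', y, z, S, hadj, rfl, rfl⟩
    · rw [if_neg ha, if_neg ha]
      by_cases hca : cm G x a
      · rw [if_pos hca, if_pos hca]
        rcases ih with ⟨h1, h2⟩ | ⟨r, r', h1, h2, h3⟩
        · rw [h1, h2]
          exact Or.inl ⟨rfl, rfl⟩
        · rw [h1, h2]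
          exact Or.inr ⟨a :: r, a :: r', rfl, rfl, shuf_cons a h3⟩
      · rw [if_neg hca, if_neg hca]
        exact Or.inl ⟨rfl, rfl⟩

lemma ins_step {x : V × Bool} {w w' : List (V × Bool)} (h : Step G w w') :
    Shuf G (ins G x w) (ins G x w') := by
  rcases dels_step (x := x) h with ⟨h1, h2⟩ | ⟨r, r', h1, h2, h3⟩
  · rw [ins, ins, h1, h2]
    exact shuf_cons x (step_shuf h)
  · rw [ins, ins, h1, h2]
    exact h3

lemma ins_shuf {x : V × Bool} {w w' : List (V × Bool)} (h : Shuf G w w') :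
    Shuf G (ins G x w) (ins G x w') := by
  induction h with
  | refl => exact shuf_refl G _
  | tail h1 h2 ih => exact shuf_trans ih (ins_step h2)

lemma ins_length {x : V × Bool} {w : List (V × Bool)} :
    (ins G x w).length ≤ w.length + 1 := by
  rw [ins]
  cases hd : dels G x w with
  | none => simp
  | some r =>
    obtain ⟨p, s, rfl, rfl, -⟩ := dels_some hd
    simp
    omega

end RaagAux
namespace RaagAux

open List

variable {V : Type*} {G : SimpleGraph V}

/-- ins preserves reducedness -/
lemma red_ins {x : V × Bool} {w : List (V × Bool)} (hw : ¬ HP G w) :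
    ¬ HP G (ins G x w) := by
  rw [ins]
  cases hd : dels G x w with
  | none =>
    intro h
    rcases hp_cons.1 h with h | h
    · exact hw h
    · exact dels_none hd h
  | some w' =>
    obtain ⟨p, s, hw1, rfl, hp⟩ := dels_some hd
    subst hw1
    simp only [Option.getD_some]
    intro h
    rcases hp_append.1 h with h | h | ⟨a, hta, hma⟩
    · exact hw (hp_append.2 (Or.inl h))
    · exact hw (hp_append.2 (Or.inr (Or.inl (hp_cons.2 (Or.inl h)))))
    · refine hw (hp_append.2 (Or.inr (Or.inr ⟨a, hta, ?_⟩)))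
      rw [hm_cons]
      refine Or.inr ⟨?_, hma⟩
      have := (hp _ (tm_mem hta)).1
      exact cm_symm (G := G) this

/-- multiplying by a letter and its inverse -/
lemma ins_ins_linv {x : V × Bool} {w : List (V × Bool)} (hw : ¬ HP G w) :
    Shuf G (ins G x (ins G (linv x) w)) w := by
  cases hd : dels G (linv x) w with
  | none =>
    have h1 : ins G (linv x) w = linv x :: w := by rw [ins, hd]; rfl
    rw [h1]
    have h2 : dels G x (linv x :: w) = some w := by
      rw [dels_cons, if_pos rfl]
    rw [ins, h2]
    exact shuf_refl G w
  | some w₁ =>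
    have h1 : ins G (linv x) w = w₁ := by rw [ins, hd]; rfl
    obtain ⟨p, s, hw1, rfl, hp⟩ := dels_some hd
    rw [linv_linv] at hw1 hp
    subst hw1
    have hpx : ∀ y ∈ p, cm G x y ∧ y ≠ linv x := by
      intro y hy
      have h3 := hp y hy
      refine ⟨h3.1, ?_⟩
      intro hly
      subst hly
      obtain ⟨p₁, s₁, rfl⟩ := List.append_of_mem hy
      apply hw
      refine ⟨p₁, linv x, s₁, s, ?_, ?_⟩
      · simp [linv_linv]
      · intro z hz
        have := (hp z (by simp [hz])).1
        exact this
    have h2 : dels G x (p ++ s) = none := by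
      cases hd2 : dels G x (p ++ s) with
      | none => rfl
      | some r =>
        exfalso
        obtain ⟨p', s', he, -, hp'⟩ := dels_some hd2
        have hhm : HM G (p ++ s) (linv x) := ⟨p', s', he, fun y hy => (hp' y hy).1⟩
        rcases hm_append.1 hhm with h3 | ⟨hca, h3⟩
        · obtain ⟨p₁, s₁, rfl, hc₁⟩ := h3
          apply hw
          refine ⟨p₁, linv x, s₁, s, by simp [linv_linv], ?_⟩
          intro z hz
          exact (hp z (by simp [hz])).1
        · obtain ⟨p₂, s₂, rfl, hc₂⟩ := h3
          apply hw
          exact ⟨p, x, p₂, s₂, by simp, hc₂⟩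
    rw [h1, ins, h2, Option.getD_none]
    have := shuf_append_right (G := G) s (shuf_move hpx)
    rw [append_assoc] at this
    exact this

/-- deletions of commuting letters interact well: none case -/
lemma dels_comm_none {x y : V × Bool} (hadj : G.Adj x.1 y.1) :
    ∀ {w r : List (V × Bool)}, dels G y w = none → dels G x w = some r →
      dels G y r = none := by
  intro w
  induction w with
  | nil => intro r _ h; simp at h
  | cons z t ih =>
    intro r hy hx
    have hzly : z ≠ linv y := by
      intro hz
      rw [dels_cons, if_pos hz] at hy
      simp at hy
    rw [dels_cons, if_neg hzly] at hy
    rw [dels_cons] at hx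
    by_cases hzlx : z = linv x
    · rw [if_pos hzlx] at hx
      obtain rfl := Option.some_injective _ hx
      have hcyz : cm G y z := by
        refine Or.inr ?_
        have : z.1 = x.1 := by rw [hzlx]; rfl
        rw [this]
        exact hadj.symm
      rw [if_pos hcyz] at hy
      exact Option.map_eq_none_iff.1 hy
    · rw [if_neg hzlx] at hx
      by_cases hcxz : cm G x z
      · rw [if_pos hcxz] at hx
        obtain ⟨r', hr', rfl⟩ := Option.map_eq_some_iff.1 hx
        by_cases hcyz : cm G y z
        · rw [if_pos hcyz] at hy
          have := ih (Option.map_eq_none_iff.1 hy) hr'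
          rw [dels_cons, if_neg hzly, if_pos hcyz, this]
          rfl
        · rw [dels_cons, if_neg hzly, if_neg hcyz]
      · rw [if_neg hcxz] at hx
        simp at hx

/-- deletions of commuting letters interact well: both-some case -/
lemma dels_comm_some {x y : V × Bool} (hadj : G.Adj x.1 y.1) :
    ∀ {w r q : List (V × Bool)}, dels G x w = some r → dels G y w = some q →
      ∃ t, dels G x q = some t ∧ dels G y r = some t := by
  have hxy : x.1 ≠ y.1 := hadj.ne
  intro w
  induction w with
  | nil => intro r q h; simp at h
  | cons z t ih =>
    intro r q hx hy
    rw [dels_cons] at hx hy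
    by_cases hzlx : z = linv x
    · rw [if_pos hzlx] at hx
      obtain rfl := Option.some_injective _ hx
      have hzly : z ≠ linv y := by
        intro h
        apply hxy
        have h1 : z.1 = x.1 := by rw [hzlx]; rfl
        have h2 : z.1 = y.1 := by rw [h]; rfl
        rw [← h1, h2]
      have hcyz : cm G y z := by
        refine Or.inr ?_
        have : z.1 = x.1 := by rw [hzlx]; rfl
        rw [this]; exact hadj.symm
      rw [if_neg hzly, if_pos hcyz] at hy
      obtain ⟨q', hq', rfl⟩ := Option.map_eq_some_iff.1 hy
      refine ⟨q', ?_, ?_⟩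
      · rw [dels_cons, if_pos hzlx]
      · exact hq'
    · rw [if_neg hzlx] at hx
      by_cases hzly : z = linv y
      · rw [if_pos hzly] at hy
        obtain rfl := Option.some_injective _ hy
        have hcxz : cm G x z := by
          refine Or.inr ?_
          have : z.1 = y.1 := by rw [hzly]; rfl
          rw [this]; exact hadj
        rw [if_pos hcxz] at hx
        obtain ⟨r', hr', rfl⟩ := Option.map_eq_some_iff.1 hx
        refine ⟨r', ?_, ?_⟩
        · exact hr'
        · rw [dels_cons, if_pos hzly]
      · rw [if_neg hzly] at hy
        by_cases hcxz : cm G x z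
        · rw [if_pos hcxz] at hx
          obtain ⟨r', hr', rfl⟩ := Option.map_eq_some_iff.1 hx
          by_cases hcyz : cm G y z
          · rw [if_pos hcyz] at hy
            obtain ⟨q', hq', rfl⟩ := Option.map_eq_some_iff.1 hy
            obtain ⟨t, ht1, ht2⟩ := ih hr' hq'
            refine ⟨z :: t, ?_, ?_⟩
            · rw [dels_cons, if_neg hzlx, if_pos hcxz, ht1]; rfl
            · rw [dels_cons, if_neg hzly, if_pos hcyz, ht2]; rfl
          · rw [if_neg hcyz] at hy
            simp at hy
        · rw [if_neg hcxz] at hx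
          simp at hx

/-- commutation of ins for adjacent letters -/
lemma ins_comm {x y : V × Bool} (hadj : G.Adj x.1 y.1) (w : List (V × Bool)) :
    Shuf G (ins G x (ins G y w)) (ins G y (ins G x w)) := by
  have hylx : y ≠ linv x := by
    intro h
    apply hadj.ne
    rw [h]; rfl
  have hxly : x ≠ linv y := by
    intro h
    apply hadj.ne
    rw [h]; rfl
  have hcxy : cm G x y := Or.inr hadj
  have hcyx : cm G y x := Or.inr hadj.symm
  cases hx : dels G x w with
  | none =>
    cases hy : dels G y w with
    | none =>
      have h1 : ins G y w = y :: w := by rw [ins, hy]; rfl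
      have h2 : ins G x w = x :: w := by rw [ins, hx]; rfl
      have h3 : dels G x (y :: w) = none := by
        rw [dels_cons, if_neg hylx, if_pos hcxy, hx]; rfl
      have h4 : dels G y (x :: w) = none := by
        rw [dels_cons, if_neg hxly, if_pos hcyx, hy]; rfl
      rw [h1, h2, ins, ins, h3, h4]
      exact step_shuf ⟨[], x, y, w, hadj, rfl, rfl⟩
    | some q =>
      have h1 : ins G y w = q := by rw [ins, hy]; rfl
      have h2 : ins G x w = x :: w := by rw [ins, hx]; rfl
      have h3 : dels G x q = none := dels_comm_none hadj.symm hx hy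
      have h4 : dels G y (x :: w) = some (x :: q) := by
        rw [dels_cons, if_neg hxly, if_pos hcyx, hy]; rfl
      rw [h1, h2, ins, ins, h3, h4]
      exact shuf_refl G _
  | some r =>
    cases hy : dels G y w with
    | none =>
      have h1 : ins G y w = y :: w := by rw [ins, hy]; rfl
      have h2 : ins G x w = r := by rw [ins, hx]; rfl
      have h3 : dels G x (y :: w) = some (y :: r) := by
        rw [dels_cons, if_neg hylx, if_pos hcxy, hx]; rfl
      have h4 : dels G y r = none := dels_comm_none hadj hy hx
      rw [h1, h2, ins, ins, h3, h4]
      exact shuf_refl G _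
    | some q =>
      have h1 : ins G y w = q := by rw [ins, hy]; rfl
      have h2 : ins G x w = r := by rw [ins, hx]; rfl
      obtain ⟨t, ht1, ht2⟩ := dels_comm_some hadj hx hy
      rw [h1, h2, ins, ins, ht1, ht2]
      exact shuf_refl G _

variable (G)

/-- reduced words -/
def RedW := {w : List (V × Bool) // ¬ HP G w}

/-- shuffle equivalence as a setoid -/
def redSetoid : Setoid (RedW G) :=
  ⟨fun a b => Shuf G a.1 b.1,
    fun _ => shuf_refl G _, shuf_symm, shuf_trans⟩

/-- normal forms up to shuffle -/
def NFQ := Quotient (redSetoid G)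

/-- the action of a letter on normal forms -/
noncomputable def insQ (x : V × Bool) : NFQ G → NFQ G :=
  Quotient.map (fun w => ⟨ins G x w.1, red_ins w.2⟩) (fun _ _ h => ins_shuf h)

lemma insQ_insQ_linv (x : V × Bool) (q : NFQ G) :
    insQ G x (insQ G (linv x) q) = q := by
  induction q using Quotient.ind with
  | _ w => exact Quotient.sound (ins_ins_linv w.2)

/-- the action of a letter as a permutation -/
noncomputable def insE (x : V × Bool) : Equiv.Perm (NFQ G) where
  toFun := insQ G x
  invFun := insQ G (linv x)
  left_inv := by
    intro q
    have := insQ_insQ_linv G (linv x) q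
    rwa [linv_linv] at this
  right_inv := insQ_insQ_linv G x

lemma insE_comm {x y : V × Bool} (hadj : G.Adj x.1 y.1) :
    insE G x * insE G y = insE G y * insE G x := by
  ext q
  induction q using Quotient.ind with
  | _ w =>
    erw [Equiv.Perm.mul_apply, Equiv.Perm.mul_apply]
    exact Quotient.sound (ins_comm hadj w.1)

/-- the homomorphism from the RAAG to permutations of normal forms -/
noncomputable def toPerm : RAAG G →* Equiv.Perm (NFQ G) :=
  PresentedGroup.toGroup (f := fun a => insE G (a, true)) (by
    rintro r ⟨a, b, hadj, rfl⟩
    simp only [map_mul, map_inv, FreeGroup.lift_apply_of]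
    have := insE_comm G (x := (a, true)) (y := (b, true)) hadj
    rw [this]
    group)

lemma toPerm_gen (a : V) : toPerm G (RAAG.gen G a) = insE G (a, true) :=
  PresentedGroup.toGroup.of _

lemma toPerm_lp (x : V × Bool) (q : NFQ G) :
    toPerm G (lp G x) q = insQ G x q := by
  cases x with
  | mk a b =>
    cases b
    · have h1 : lp G (a, false) = (RAAG.gen G a)⁻¹ := by simp [lp]
      rw [h1, map_inv, toPerm_gen]
      show ((insE G (a, true))⁻¹ : Equiv.Perm (NFQ G)) q = _
      rw [Equiv.Perm.inv_def]
      rfl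
    · have h1 : lp G (a, true) = RAAG.gen G a := by simp [lp]
      rw [h1, toPerm_gen]
      rfl

/-- the normal form of a word -/
noncomputable def nf (w : List (V × Bool)) : List (V × Bool) :=
  List.foldr (ins G) [] w

lemma red_nf (w : List (V × Bool)) : ¬ HP G (nf G w) := by
  induction w with
  | nil => exact hp_nil
  | cons x t ih => exact red_ins ih

lemma nf_length_le (w : List (V × Bool)) : (nf G w).length ≤ w.length := by
  induction w with
  | nil => simp [nf]
  | cons x t ih =>
    have := ins_length (G := G) (x := x) (w := nf G t)
    show (ins G x (nf G t)).length ≤ t.length + 1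
    omega

lemma toPerm_wordProd (w : List (V × Bool)) :
    toPerm G (wordProd G w) (Quotient.mk (redSetoid G) ⟨[], hp_nil⟩) =
      Quotient.mk (redSetoid G) ⟨nf G w, red_nf G w⟩ := by
  induction w with
  | nil => rw [wordProd_nil, map_one]; rfl
  | cons x t ih =>
    rw [wordProd_cons, map_mul]
    erw [Equiv.Perm.mul_apply, ih, toPerm_lp]
    rfl

lemma nf_shuf_self {w : List (V × Bool)} (hw : ¬ HP G w) : Shuf G (nf G w) w := by
  induction w with
  | nil => exact shuf_refl G _
  | cons x t ih =>
    have hrt : ¬ HP G t := fun h => hw (hp_cons.2 (Or.inl h))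
    have h1 : Shuf G (ins G x (nf G t)) (ins G x t) := ins_shuf (ih hrt)
    have h2 : ins G x t = x :: t := by
      rw [ins]
      cases hd : dels G x t with
      | none => rfl
      | some r =>
        exfalso
        obtain ⟨p, s, rfl, -, hp⟩ := dels_some hd
        exact hw (hp_cons.2 (Or.inr ⟨p, s, rfl, fun y hy => (hp y hy).1⟩))
    rw [h2] at h1
    exact h1

/-- THE KEY THEOREM: words without cancelling pairs are geodesic -/
theorem red_isReducedWord {w : List (V × Bool)} (hw : ¬ HP G w) :
    IsReducedWord G w := by
  intro w' hprod
  have h1 := toPerm_wordProd G w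
  have h2 := toPerm_wordProd G w'
  rw [hprod, h1] at h2
  have h3 : Shuf G (nf G w) (nf G w') := Quotient.exact h2
  have h4 := shuf_length h3
  have h5 := shuf_length (nf_shuf_self G hw)
  have h6 := nf_length_le G w'
  omega

end RaagAux
namespace RaagAux

open List

variable {V : Type*} {G : SimpleGraph V}

/-- the conditions ensuring that all conjugated powers are reduced -/
def Good (G : SimpleGraph V) (u v : List (V × Bool)) : Prop :=
  ¬ HP G v ∧ (¬ ∃ x, TM G v x ∧ HM G v (linv x)) ∧ ¬ HP G u ∧
    (¬ ∃ x, HM G u x ∧ AllCm G x v) ∧ (¬ ∃ x, TM G v x ∧ HM G u (linv x)) ∧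
    (¬ ∃ x, HM G v x ∧ HM G u x)

/-- positive powers of a word -/
def wpow (k : ℕ) (v : List (V × Bool)) : List (V × Bool) :=
  (List.replicate k v).flatten

lemma wpow_succ (k : ℕ) (v : List (V × Bool)) :
    wpow (k + 1) v = v ++ wpow k v := rfl

lemma hm_wpow {k : ℕ} {v : List (V × Bool)} {x : V × Bool}
    (h : HM G (wpow (k + 1) v) x) : HM G v x := by
  induction k with
  | zero =>
    rw [wpow_succ] at h
    rcases hm_append.1 h with h | ⟨-, h⟩
    · exact h
    · exact absurd h hm_nil
  | succ k ih =>
    rw [wpow_succ] at h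
    rcases hm_append.1 h with h | ⟨-, h⟩
    · exact h
    · exact ih h

lemma tm_wpow {k : ℕ} {v : List (V × Bool)} {x : V × Bool}
    (h : TM G (wpow (k + 1) v) x) : TM G v x := by
  induction k with
  | zero =>
    rw [wpow_succ] at h
    rcases tm_append.1 h with h | ⟨h, -⟩
    · exact absurd h tm_nil
    · exact h
  | succ k ih =>
    rw [wpow_succ] at h
    rcases tm_append.1 h with h | ⟨h, -⟩
    · exact ih h
    · exact h

lemma hp_wpow {k : ℕ} {v : List (V × Bool)} (h : HP G (wpow (k + 1) v)) :
    HP G v ∨ ∃ x, TM G v x ∧ HM G v (linv x) := by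
  induction k with
  | zero =>
    rw [wpow_succ] at h
    rcases hp_append.1 h with h | h | ⟨x, h1, h2⟩
    · exact Or.inl h
    · exact absurd h hp_nil
    · exact absurd h2 hm_nil
  | succ k ih =>
    rw [wpow_succ] at h
    rcases hp_append.1 h with h | h | ⟨x, h1, h2⟩
    · exact Or.inl h
    · exact ih h
    · exact Or.inr ⟨x, h1, hm_wpow h2⟩

lemma allCm_wpow {k : ℕ} {v : List (V × Bool)} {x : V × Bool}
    (h : AllCm G x (wpow (k + 1) v)) : AllCm G x v := by
  rw [wpow_succ, allCm_append] at h
  exact h.1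

/-- the main combinatorial lemma: for good pairs, conjugated powers have
no cancelling pairs -/
lemma good_no_hp {u v : List (V × Bool)} (hG : Good G u v) (k : ℕ) :
    ¬ HP G (wordInv u ++ wpow (k + 1) v ++ u) := by
  obtain ⟨g1, g2, g3, g4, g5, g6⟩ := hG
  intro h
  rw [append_assoc] at h
  rcases hp_append.1 h with h | h | ⟨x, h1, h2⟩
  · exact g3 (hp_wordInv.1 h)
  · rcases hp_append.1 h with h | h | ⟨x, h1, h2⟩
    · rcases hp_wpow h with h | h
      · exact g1 h
      · exact g2 h
    · exact g3 h
    · exact g5 ⟨x, tm_wpow h1, h2⟩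
  · rw [tm_wordInv] at h1
    rcases hm_append.1 h2 with h2 | ⟨hca, h2⟩
    · exact g6 ⟨linv x, hm_wpow h2, h1⟩
    · exact g4 ⟨linv x, h1, allCm_wpow hca⟩

/-- goodness passes to the inverse word -/
lemma good_wordInv {u v : List (V × Bool)} (hG : Good G u v) :
    Good G u (wordInv v) := by
  obtain ⟨g1, g2, g3, g4, g5, g6⟩ := hG
  refine ⟨fun h => g1 (hp_wordInv.1 h), ?_, g3, ?_, ?_, ?_⟩
  · rintro ⟨x, h1, h2⟩
    rw [tm_wordInv] at h1
    rw [hm_wordInv] at h2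
    rw [linv_linv] at h2
    exact g2 ⟨x, h2, h1⟩
  · rintro ⟨x, h1, h2⟩
    rw [allCm_wordInv] at h2
    exact g4 ⟨x, h1, h2⟩
  · rintro ⟨x, h1, h2⟩
    rw [tm_wordInv] at h1
    exact g6 ⟨linv x, h1, h2⟩
  · rintro ⟨x, h1, h2⟩
    rw [hm_wordInv] at h1
    refine g5 ⟨linv x, h1, ?_⟩
    rwa [linv_linv]

/-- good pairs give reduced conjugated powers -/
lemma good_reduced {u v : List (V × Bool)} (hG : Good G u v) (m : ℤ) (hm : m ≠ 0) :
    IsReducedWord G (wordInv u ++ wordZPow v m ++ u) := by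
  apply red_isReducedWord
  match m, hm with
  | Int.ofNat (k + 1), _ =>
    show ¬ HP G (wordInv u ++ wpow (k + 1) v ++ u)
    exact good_no_hp hG k
  | Int.negSucc k, _ =>
    show ¬ HP G (wordInv u ++ wpow (k + 1) (wordInv v) ++ u)
    exact good_no_hp (good_wordInv hG) k

end RaagAux
namespace RaagAux

open List

variable {V : Type*} {G : SimpleGraph V}

lemma comm_rot {a b : RAAG G} (h : Commute a b) (t : RAAG G) :
    a * (b * t) = b * (a * t) := by
  rw [← mul_assoc, h.eq, mul_assoc]

lemma wp_pull_left {x : V × Bool} {P : List (V × Bool)} (hP : AllCm G x P)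
    (R : List (V × Bool)) :
    wordProd G (P ++ x :: R) = lp G x * wordProd G (P ++ R) := by
  rw [wordProd_append, wordProd_cons, wordProd_append, ← mul_assoc,
    ← (lp_comm_word G hP).eq, mul_assoc]

lemma wp_pull_right {x : V × Bool} {S : List (V × Bool)} (hS : AllCm G x S)
    (Q : List (V × Bool)) :
    wordProd G (Q ++ x :: S) = wordProd G (Q ++ S) * lp G x := by
  rw [wordProd_append, wordProd_cons, wordProd_append, (lp_comm_word G hS).eq,
    ← mul_assoc]

lemma wp_cancel {x : V × Bool} {q : List (V × Bool)} (hq : AllCm G x q)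
    (p s : List (V × Bool)) :
    wordProd G (p ++ x :: (q ++ linv x :: s)) = wordProd G (p ++ (q ++ s)) := by
  have h1 : wordProd G (q ++ linv x :: s) = lp G (linv x) * wordProd G (q ++ s) :=
    wp_pull_left (by rwa [allCm_linv]) s
  rw [wordProd_append, wordProd_cons, h1, lp_linv, mul_inv_cancel_left,
    ← wordProd_append]

lemma wp_conj (u v : List (V × Bool)) :
    wordProd G (wordInv u ++ v ++ u) =
      (wordProd G u)⁻¹ * wordProd G v * wordProd G u := by
  rw [wordProd_append, wordProd_append, wordProd_wordInv]

lemma two_split {p1 s1 p2 s2 : List (V × Bool)} {x y : V × Bool} (hxy : x ≠ y)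
    (h : p1 ++ x :: s1 = p2 ++ y :: s2) :
    (∃ mid, p2 = p1 ++ x :: mid ∧ s1 = mid ++ y :: s2) ∨
      (∃ mid, p1 = p2 ++ y :: mid ∧ s2 = mid ++ x :: s1) := by
  rcases loc h with ⟨S₁, hA, hS⟩ | ⟨P₂, hP, hB⟩
  · exact Or.inr ⟨S₁, hA, hS⟩
  · cases P₂ with
    | nil =>
      rw [nil_append, List.cons_eq_cons] at hB
      exact absurd hB.1 hxy
    | cons c P₂' =>
      rw [cons_append, List.cons_eq_cons] at hB
      obtain ⟨rfl, hB2⟩ := hB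
      refine Or.inl ⟨P₂', ?_, hB2⟩
      rw [hP]

/-- extraction of a cyclic reduction -/
lemma cyc_split {v : List (V × Bool)} (h : ∃ x, TM G v x ∧ HM G v (linv x)) :
    ∃ y P Q S, v = P ++ y :: (Q ++ linv y :: S) ∧ AllCm G y P ∧ AllCm G y S := by
  obtain ⟨x, ⟨p1, s1, hv1, hc1⟩, ⟨p2, s2, hv2, hc2⟩⟩ := h
  have hxl : x ≠ linv x := (linv_ne x).symm
  rw [hv1] at hv2
  rcases two_split hxl hv2 with ⟨mid, hm1, hm2⟩ | ⟨mid, hm1, hm2⟩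
  · refine ⟨x, p1, mid, s2, ?_, ?_, ?_⟩
    · rw [hv1, hm2]
    · rw [hm1, allCm_linv, allCm_append] at hc2
      exact hc2.1
    · rw [hm2, allCm_append, allCm_cons] at hc1
      exact hc1.2.2
  · refine ⟨linv x, p2, mid, s1, ?_, hc2, ?_⟩
    · rw [hv1, hm1, linv_linv]
      simp
    · rw [allCm_linv]
      exact hc1

/-- the descent -/
lemma descend : ∀ (N K : ℕ) (u v : List (V × Bool)),
    2 * u.length + v.length ≤ N → v.length ≤ K →
    ∃ u' v', Good G u' v' ∧
      wordProd G (wordInv u' ++ v' ++ u') = wordProd G (wordInv u ++ v ++ u) := by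
  have goodNil : Good G [] [] := by
    refine ⟨hp_nil, ?_, hp_nil, ?_, ?_, ?_⟩
    · rintro ⟨x, h, -⟩; exact tm_nil h
    · rintro ⟨x, h, -⟩; exact hm_nil h
    · rintro ⟨x, h, -⟩; exact tm_nil h
    · rintro ⟨x, h, -⟩; exact hm_nil h
  -- the moves, as standalone steps
  intro N
  induction N with
  | zero =>
    intro K u v hN hK
    have hu : u = [] := by
      rw [← List.length_eq_zero_iff]
      omega
    have hv : v = [] := by
      rw [← List.length_eq_zero_iff]
      omega
    subst hu; subst hv
    exact ⟨[], [], goodNil, rfl⟩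
  | succ N ihN =>
    -- move 1 : cancel a pair in v
    have move1 : ∀ u v : List (V × Bool), 2 * u.length + v.length ≤ N + 1 →
        HP G v → ∃ u' v', Good G u' v' ∧
        wordProd G (wordInv u' ++ v' ++ u') = wordProd G (wordInv u ++ v ++ u) := by
      intro u v hN h1
      obtain ⟨p, x, q, s, rfl, hc⟩ := h1
      have hlen : (p ++ (q ++ s)).length + 2 = (p ++ x :: (q ++ linv x :: s)).length := by
        simp only [List.length_append, List.length_cons]
        omega
      obtain ⟨u', v', hg, he⟩ := ihN N u (p ++ (q ++ s)) (by omega) (by omega)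
      refine ⟨u', v', hg, he.trans ?_⟩
      rw [wp_conj, wp_conj, wp_cancel hc]
    -- move 3 : cancel a pair in u
    have move3 : ∀ u v : List (V × Bool), 2 * u.length + v.length ≤ N + 1 →
        HP G u → ∃ u' v', Good G u' v' ∧
        wordProd G (wordInv u' ++ v' ++ u') = wordProd G (wordInv u ++ v ++ u) := by
      intro u v hN h3
      obtain ⟨p, x, q, s, rfl, hc⟩ := h3
      have hlen : (p ++ (q ++ s)).length + 2 = (p ++ x :: (q ++ linv x :: s)).length := by
        simp only [List.length_append, List.length_cons]
        omega
      obtain ⟨u', v', hg, he⟩ := ihN N (p ++ (q ++ s)) v (by omega) (by omega)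
      refine ⟨u', v', hg, he.trans ?_⟩
      rw [wp_conj, wp_conj, wp_cancel hc]
    -- move 4 : erase a letter of u commuting with v and its prefix
    have move4 : ∀ u v : List (V × Bool), 2 * u.length + v.length ≤ N + 1 →
        (∃ x, HM G u x ∧ AllCm G x v) → ∃ u' v', Good G u' v' ∧
        wordProd G (wordInv u' ++ v' ++ u') = wordProd G (wordInv u ++ v ++ u) := by
      intro u v hN h4
      obtain ⟨x, ⟨p, s, rfl, hcp⟩, hcv⟩ := h4
      have hlen : (p ++ s).length + 1 = (p ++ x :: s).length := by
        simp only [List.length_append, List.length_cons]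
        omega
      obtain ⟨u', v', hg, he⟩ := ihN N (p ++ s) v (by omega) (by omega)
      refine ⟨u', v', hg, he.trans ?_⟩
      rw [wp_conj, wp_conj, wp_pull_left hcp s, mul_inv_rev]
      simp only [mul_assoc]
      rw [comm_rot ((lp_comm_word G hcv).inv_left), inv_mul_cancel_left]
    -- move 2 : cyclic reduction of v
    intro K
    induction K with
    | zero =>
      intro u v hN hK
      have hv : v = [] := by
        rw [← List.length_eq_zero_iff]
        omega
      subst hv
      by_cases h3 : HP G u
      · exact move3 u [] hN h3
      · by_cases h4 : ∃ x, HM G u x ∧ AllCm G x ([] : List (V × Bool))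
        · exact move4 u [] hN h4
        · refine ⟨u, [], ⟨hp_nil, ?_, h3, h4, ?_, ?_⟩, rfl⟩
          · rintro ⟨x, h, -⟩; exact tm_nil h
          · rintro ⟨x, h, -⟩; exact tm_nil h
          · rintro ⟨x, h, -⟩; exact hm_nil h
    | succ K ihK =>
      intro u v hN hK
      by_cases h1 : HP G v
      · exact move1 u v hN h1
      by_cases h2 : ∃ x, TM G v x ∧ HM G v (linv x)
      · -- move 2
        obtain ⟨y, P, Q, S, rfl, hcP, hcS⟩ := cyc_split h2
        have hlen : ((P ++ Q) ++ S).length + 2 = (P ++ y :: (Q ++ linv y :: S)).length := by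
          simp only [List.length_append, List.length_cons]
          omega
        have hb1 : 2 * (linv y :: u).length + ((P ++ Q) ++ S).length ≤ N + 1 := by
          simp only [List.length_cons, List.length_append] at hN hlen ⊢
          omega
        have hb2 : ((P ++ Q) ++ S).length ≤ K := by
          simp only [List.length_cons, List.length_append] at hK hlen ⊢
          omega
        obtain ⟨u', v', hg, he⟩ := ihK (linv y :: u) ((P ++ Q) ++ S) hb1 hb2
        refine ⟨u', v', hg, he.trans ?_⟩
        rw [wp_conj, wp_conj, wordProd_cons, wp_pull_left hcP (Q ++ linv y :: S),
          ← append_assoc, wp_pull_right (by rwa [allCm_linv]) (P ++ Q), lp_linv,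
          mul_inv_rev, inv_inv]
        group
      by_cases h3 : HP G u
      · exact move3 u v hN h3
      by_cases h4 : ∃ x, HM G u x ∧ AllCm G x v
      · exact move4 u v hN h4
      by_cases h5 : ∃ x, TM G v x ∧ HM G u (linv x)
      · -- move 5
        obtain ⟨x, ⟨pv, qv, rfl, hcv⟩, ⟨pu, su, rfl, hcu⟩⟩ := h5
        rw [allCm_linv] at hcu
        have hlen1 : (pv ++ x :: qv).length = pv.length + qv.length + 1 := by
          simp only [List.length_append, List.length_cons]
          omega
        have hlen2 : (pu ++ linv x :: su).length = pu.length + su.length + 1 := by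
          simp only [List.length_append, List.length_cons]
          omega
        have hlen3 : (x :: (wordInv pu ++ (pv ++ qv) ++ pu)).length =
            2 * pu.length + pv.length + qv.length + 1 := by
          simp only [List.length_cons, List.length_append, wordInv_length]
          omega
        obtain ⟨u', v', hg, he⟩ := ihN N su (x :: (wordInv pu ++ (pv ++ qv) ++ pu))
          (by omega) (by omega)
        refine ⟨u', v', hg, he.trans ?_⟩
        have hcm := lp_comm_word G hcu
        rw [wp_conj, wp_conj, wp_pull_right hcv pv,
          wp_pull_left (by rwa [allCm_linv]) su, lp_linv]
        simp only [wordProd_cons, wordProd_append, wordProd_wordInv, mul_inv_rev,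
          mul_assoc, inv_inv, inv_mul_cancel_left, mul_inv_cancel_left]
        rw [comm_rot hcm.inv_right]
      by_cases h6 : ∃ x, HM G v x ∧ HM G u x
      · -- move 6
        obtain ⟨x, ⟨pv, qv, rfl, hcv⟩, ⟨pu, su, rfl, hcu⟩⟩ := h6
        have hlen1 : (pv ++ x :: qv).length = pv.length + qv.length + 1 := by
          simp only [List.length_append, List.length_cons]
          omega
        have hlen2 : (pu ++ x :: su).length = pu.length + su.length + 1 := by
          simp only [List.length_append, List.length_cons]
          omega
        have hlen3 : ((wordInv pu ++ (pv ++ qv) ++ pu) ++ [x]).length =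
            2 * pu.length + pv.length + qv.length + 1 := by
          simp only [List.length_cons, List.length_append, wordInv_length, List.length_nil]
          omega
        obtain ⟨u', v', hg, he⟩ := ihN N su ((wordInv pu ++ (pv ++ qv) ++ pu) ++ [x])
          (by omega) (by omega)
        refine ⟨u', v', hg, he.trans ?_⟩
        have hcm := lp_comm_word G hcu
        rw [wp_conj, wp_conj, wp_pull_left hcv qv, wp_pull_left hcu su]
        simp only [wordProd_singleton, wordProd_append, wordProd_wordInv, mul_inv_rev,
          mul_assoc, inv_mul_cancel_left, mul_inv_cancel_left]
        rw [comm_rot hcm]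
      · exact ⟨u, v, ⟨h1, h2, h3, h4, h5, h6⟩, rfl⟩

end RaagAux
theorem exists_conjugate_power_reduced {V : Type*} (G : SimpleGraph V) (g : RAAG G) :
    ∃ u v : List (V × Bool), wordProd G (wordInv u ++ v ++ u) = g ∧
      ∀ m : ℤ, m ≠ 0 → IsReducedWord G (wordInv u ++ wordZPow v m ++ u) := by
  obtain ⟨w, hw⟩ := RaagAux.wordProd_surjective G g
  obtain ⟨u', v', hgood, he⟩ := RaagAux.descend (2 * List.length ([] : List (V × Bool)) + w.length)
    w.length [] w (le_refl _) (le_refl _)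
  refine ⟨u', v', ?_, fun m hm => RaagAux.good_reduced hgood m hm⟩
  rw [he]
  have h2 : wordInv ([] : List (V × Bool)) ++ w ++ [] = w := by simp [wordInv]
  rw [h2]
  exact hw
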